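/- Let T be an ORB-tree with covariance matrix S, v a non-root internal node with children v0 and v1, and λ_v := φ_v' S φ_v. Then λ_v = ρ_{v1}·avg(ℓ*(·,v); L(v0)) + ρ_{v0}·avg(ℓ*(·,v); L(v1)), and ‖(S − λ_v I)φ_v‖₂² = ρ_{v0} ρ_{v1} (avg(ℓ*(·,v); L(v1)) − avg(ℓ*(·,v); L(v0)))² + ρ_{v1}·var(ℓ*(·,v); L(v0)) + ρ_{v0}·var(ℓ*(·,v); L(v1)); consequently dist(λ_v, σ(S)) ≤ ‖(S − λ_v I)φ_v‖₂. -/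

import Mathlib

open Finset

noncomputable section
open scoped Classical

/-- A finite rooted tree on vertices `Fin n`, given by a parent function:
every vertex reaches the root by iterating `parent`, and the root is its own parent. -/
structure RTree where
  n : ℕ
  npos : 0 < n
  root : Fin n
  parent : Fin n → Fin n
  parent_root : parent root = root
  reach : ∀ v, ∃ k, parent^[k] v = root

namespace RTree

variable (T : RTree)

/-- `u` is an ancestor of `v` (every vertex is an ancestor of itself). -/
def Anc (u v : Fin T.n) : Prop := ∃ k, T.parent^[k] v = u

/-- The children of a vertex. -/
def children (v : Fin T.n) : Finset (Fin T.n) :=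
  Finset.univ.filter fun u => T.parent u = v ∧ u ≠ T.root

def IsLeaf (v : Fin T.n) : Prop := T.children v = ∅

/-- The leaf set of the tree. -/
def leaves : Finset (Fin T.n) := Finset.univ.filter fun v => T.IsLeaf v

/-- The internal (non-leaf) vertices; the root is internal. -/
def internal : Finset (Fin T.n) := Finset.univ.filter fun v => ¬ T.IsLeaf v

/-- `L(v)`: the leaves descending from `v`. -/
def Ldesc (v : Fin T.n) : Finset (Fin T.n) := T.leaves.filter fun i => T.Anc v i

/-- Depth of a vertex: number of edges to the root. -/
def depth (v : Fin T.n) : ℕ := Nat.find (T.reach v)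

/-- Number of vertices of the subtree rooted at `v`. -/
def subtreeSize (v : Fin T.n) : ℕ := (Finset.univ.filter fun u => T.Anc v u).card

/-- ORB-tree: the root has exactly one child and is not a leaf, and every other
internal vertex has exactly two children (so every vertex has degree 1 or 3). -/
def IsORB : Prop :=
  ¬ T.IsLeaf T.root ∧ (T.children T.root).card = 1 ∧
  ∀ v, ¬ T.IsLeaf v → v ≠ T.root → (T.children v).card = 2

/-- The type of leaves. -/
abbrev Leaf := {i // i ∈ T.leaves}

/-- `δ_e` for the edge `e` above vertex `v`: the indicator vector of the leaves
descending from that edge. -/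
def delta (v : Fin T.n) : T.Leaf → ℝ := fun i => if T.Anc v i.1 then 1 else 0

/-- The covariance matrix of the tree with branch lengths `ℓ`
(`ℓ v` is the length of the edge joining `v` to its parent):
`S = ∑_{e ∈ E} ℓ(e) δ_e δ_e'`.  Equivalently `S(i,j) = ∑_{e ∈ [i∧j,∘]} ℓ(e)`. -/
def cov (ℓ : Fin T.n → ℝ) : Matrix T.Leaf T.Leaf ℝ :=
  ∑ v ∈ Finset.univ.filter (fun v => v ≠ T.root),
    ℓ v • Matrix.vecMulVec (T.delta v) (T.delta v)

/-- The trace branch length `ℓ*(i,v) = ∑_{e ∈ [i,v]} |L(e)| ℓ(e)`; the edge above `w`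
lies on the path between `i` and `v` iff exactly one of `i`, `v` descends from `w`. -/
def lstar (ℓ : Fin T.n → ℝ) (i v : Fin T.n) : ℝ :=
  ∑ w ∈ Finset.univ.filter (fun w => w ≠ T.root ∧
      ((T.Anc w i ∧ ¬ T.Anc w v) ∨ (T.Anc w v ∧ ¬ T.Anc w i))),
    ((T.Ldesc w).card : ℝ) * ℓ w

/-- `φ` is the family of Haar-like wavelets of `T`, indexed by internal vertices. -/
def IsHaarLike (φ : Fin T.n → T.Leaf → ℝ) : Prop :=
  (∀ i, φ T.root i = 1 / Real.sqrt ((T.leaves.card : ℝ))) ∧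
  ∀ v ∈ T.internal, v ≠ T.root → ∃ c₀ c₁, c₀ ≠ c₁ ∧ T.children v = {c₀, c₁} ∧
    ∀ i : T.Leaf, φ v i =
      if i.1 ∈ T.Ldesc c₀ then
        Real.sqrt (((T.Ldesc c₁).card : ℝ) / (((T.Ldesc c₀).card : ℝ) * ((T.Ldesc v).card : ℝ)))
      else if i.1 ∈ T.Ldesc c₁ then
        - Real.sqrt (((T.Ldesc c₀).card : ℝ) / (((T.Ldesc c₁).card : ℝ) * ((T.Ldesc v).card : ℝ)))
      else 0

/-- `T` is trace-balanced (at every non-root internal vertex). -/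
def TraceBalanced (ℓ : Fin T.n → ℝ) : Prop :=
  ∀ v ∈ T.internal, v ≠ T.root → ∀ i ∈ T.Ldesc v, ∀ j ∈ T.Ldesc v,
    T.lstar ℓ i v = T.lstar ℓ j v

end RTree

/-!
The wavelet `φ_v` is supported on `L(v)`, sums to zero there and is constant on `L(v0)` and
`L(v1)`. Writing `S = ∑_e ℓ(e) δ_e δ_eᵀ`, the pairing `⟨δ_e, φ_v⟩` vanishes for edges above `v`
(zero sum) and for edges off the subtree of `v` (disjoint support), and equals `|L(e)| φ_v(i)` for
an edge `e` between `v` and a leaf `i`; hence `(S φ_v)(i) = ℓ*(i,v) φ_v(i)`. Since `φ_v²` is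
`ρ_{v1}/|L(v0)|` on `L(v0)` and `ρ_{v0}/|L(v1)|` on `L(v1)`, every quadratic quantity in `φ_v`
(`λ_v`, `‖φ_v‖²`, the residual) is a `ρ`-weighted combination of averages over `L(v0)` and
`L(v1)`, and the residual splits by the bias–variance identity. The spectral bound is the residual
estimate for a symmetric matrix, read off in an orthonormal eigenbasis.
-/

open Finset Module

theorem Finset.sum_sq_sub_div_card {α : Type*} (s : Finset α) (hs : s.Nonempty) (g : α → ℝ)
    (c : ℝ) : (∑ i ∈ s, (g i - c) ^ 2) / s.card =
      (∑ i ∈ s, (g i - (∑ j ∈ s, g j) / s.card) ^ 2) / s.card +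
        ((∑ j ∈ s, g j) / s.card - c) ^ 2 := by
  have hcard : (s.card : ℝ) ≠ 0 := by exact_mod_cast hs.card_pos.ne'
  simp only [sub_sq, sum_add_distrib, sum_sub_distrib, ← sum_mul, ← mul_sum, sum_const,
    nsmul_eq_mul]
  field_simp
  ring

theorem Real.mul_sqrt_div_mul_comm {a b : ℝ} (ha : 0 < a) (hb : 0 < b) (c : ℝ) :
    a * √(b / (a * c)) = b * √(a / (b * c)) := by
  rw [← Real.sqrt_sq ha.le, ← Real.sqrt_mul (sq_nonneg a), ← Real.sqrt_sq hb.le,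
    ← Real.sqrt_mul (sq_nonneg b), Real.sqrt_sq ha.le, Real.sqrt_sq hb.le]
  congr 1
  field_simp

theorem LinearMap.IsSymmetric.exists_hasEigenvalue_abs_sub_le {E : Type*}
    [NormedAddCommGroup E] [InnerProductSpace ℝ E] [FiniteDimensional ℝ E]
    {T : E →ₗ[ℝ] E} (hT : T.IsSymmetric) {x : E} (hx : ‖x‖ = 1) (c : ℝ) :
    ∃ μ, End.HasEigenvalue T μ ∧ |μ - c| ≤ ‖T x - c • x‖ := by
  set b := hT.eigenvectorBasis rfl
  set μ := hT.eigenvalues rfl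
  have : Nonempty (Fin (finrank ℝ E)) := by
    rw [← Fin.pos_iff_nonempty, finrank_pos_iff_exists_ne_zero]
    exact ⟨x, norm_ne_zero_iff.1 (by simp [hx])⟩
  obtain ⟨i₀, -, hi₀⟩ := exists_min_image univ (fun i => |μ i - c|) univ_nonempty
  refine ⟨μ i₀, hT.hasEigenvalue_eigenvalues rfl i₀, ?_⟩
  have hrepr : ∀ i, b.repr (T x - c • x) i = (μ i - c) * b.repr x i := fun i => by
    simp [b, μ, hT.eigenvectorBasis_apply_self_apply, sub_mul]
  rw [← abs_norm, ← sq_le_sq, ← b.repr.norm_map, EuclideanSpace.norm_sq_eq]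
  calc (μ i₀ - c) ^ 2 = ∑ i, |μ i₀ - c| ^ 2 * ‖b.repr x i‖ ^ 2 := by
        rw [← sq_abs, ← mul_sum, ← EuclideanSpace.norm_sq_eq, b.repr.norm_map, hx, one_pow,
          mul_one]
    _ ≤ ∑ i, ‖b.repr (T x - c • x) i‖ ^ 2 := by
        gcongr with i
        rw [hrepr, norm_mul, mul_pow, Real.norm_eq_abs]
        gcongr
        exact hi₀ i (mem_univ i)

theorem Matrix.IsHermitian.exists_mem_spectrum_abs_sub_le {ι : Type*} [Fintype ι]
    [DecidableEq ι] {A : Matrix ι ι ℝ} (hA : A.IsHermitian) {x : ι → ℝ}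
    (hx : ∑ i, x i ^ 2 = 1) (c : ℝ) :
    ∃ μ ∈ spectrum ℝ A, |μ - c| ≤ Real.sqrt (∑ i, (A.mulVec x i - c * x i) ^ 2) := by
  have hx' : ‖WithLp.toLp 2 x‖ = 1 := by simp [EuclideanSpace.norm_eq, hx]
  obtain ⟨μ, hμ, hle⟩ :=
    (Matrix.isSymmetric_toEuclideanLin_iff.2 hA).exists_hasEigenvalue_abs_sub_le hx' c
  refine ⟨μ, Matrix.spectrum_toLpLin (A := A) 2 ▸ hμ.mem_spectrum, ?_⟩
  simpa [EuclideanSpace.norm_eq] using hle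

namespace RTree

open Matrix

variable {T : RTree}

theorem anc_refl (T : RTree) (v : Fin T.n) : T.Anc v v := ⟨0, rfl⟩

theorem Anc.trans {u v w : Fin T.n} (huv : T.Anc u v) (hvw : T.Anc v w) : T.Anc u w := by
  obtain ⟨k, rfl⟩ := huv
  obtain ⟨m, rfl⟩ := hvw
  exact ⟨k + m, Function.iterate_add_apply _ _ _ _⟩

theorem eq_root_of_anc_root {u : Fin T.n} (h : T.Anc u T.root) : u = T.root := by
  obtain ⟨k, rfl⟩ := h
  exact Function.iterate_fixed T.parent_root k

theorem eq_root_of_iterate_parent_eq_self {v : Fin T.n} {k : ℕ} (hk : 0 < k)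
    (h : T.parent^[k] v = v) : v = T.root := by
  obtain ⟨m, hm⟩ := T.reach v
  have hper : Function.IsPeriodicPt T.parent (k * m) v := Function.IsPeriodicPt.mul_const h m
  refine eq_root_of_anc_root ⟨k * m - m, ?_⟩
  rw [← hm, ← Function.iterate_add_apply, Nat.sub_add_cancel (Nat.le_mul_of_pos_left m hk)]
  exact hper

theorem Anc.antisymm {u v : Fin T.n} (huv : T.Anc u v) (hvu : T.Anc v u) : u = v := by
  obtain ⟨k, rfl⟩ := huv
  obtain ⟨m, hm⟩ := hvu
  rcases Nat.eq_zero_or_pos (m + k) with h | h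
  · obtain rfl : k = 0 := by omega
    rfl
  · have hv := eq_root_of_iterate_parent_eq_self h (by rwa [Function.iterate_add_apply])
    rw [hv, Function.iterate_fixed T.parent_root]

theorem Anc.total_of_anc {u w i : Fin T.n} (hu : T.Anc u i) (hw : T.Anc w i) :
    T.Anc u w ∨ T.Anc w u := by
  obtain ⟨k, rfl⟩ := hu
  obtain ⟨m, rfl⟩ := hw
  rcases le_total k m with h | h
  · exact Or.inr ⟨m - k, by rw [← Function.iterate_add_apply, Nat.sub_add_cancel h]⟩
  · exact Or.inl ⟨k - m, by rw [← Function.iterate_add_apply, Nat.sub_add_cancel h]⟩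

theorem mem_children {c v : Fin T.n} : c ∈ T.children v ↔ T.parent c = v ∧ c ≠ T.root := by
  simp [children]

theorem anc_of_mem_children {c v : Fin T.n} (h : c ∈ T.children v) : T.Anc v c :=
  ⟨1, (mem_children.1 h).1⟩

theorem ne_of_mem_children {c v : Fin T.n} (h : c ∈ T.children v) : c ≠ v := by
  rintro rfl
  obtain ⟨hp, hr⟩ := mem_children.1 h
  exact hr (eq_root_of_iterate_parent_eq_self one_pos hp)

theorem Anc.eq_or_anc_parent {w c : Fin T.n} (h : T.Anc w c) : w = c ∨ T.Anc w (T.parent c) := by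
  obtain ⟨_ | k, rfl⟩ := h
  · exact Or.inl rfl
  · exact Or.inr ⟨k, rfl⟩

theorem not_anc_of_mem_children {v c₀ c₁ : Fin T.n} (h₀ : c₀ ∈ T.children v)
    (h₁ : c₁ ∈ T.children v) (hne : c₀ ≠ c₁) : ¬ T.Anc c₀ c₁ := by
  intro h
  rcases h.eq_or_anc_parent with h | h
  · exact hne h
  · rw [(mem_children.1 h₁).1] at h
    exact ne_of_mem_children h₀ ((anc_of_mem_children h₀).antisymm h).symm

theorem exists_mem_children_anc {v w : Fin T.n} (h : T.Anc v w) (hne : w ≠ v) :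
    ∃ c ∈ T.children v, T.Anc c w := by
  have hk : T.parent^[Nat.find h] w = v := Nat.find_spec h
  obtain ⟨j, hj⟩ : ∃ j, Nat.find h = j + 1 :=
    Nat.exists_eq_succ_of_ne_zero fun h0 => hne (by rwa [h0] at hk)
  have hparent : T.parent (T.parent^[j] w) = v := by
    rwa [← Function.iterate_succ_apply' T.parent, Nat.succ_eq_add_one, ← hj]
  refine ⟨T.parent^[j] w, mem_children.2 ⟨hparent, fun hr => ?_⟩, ⟨j, rfl⟩⟩
  rw [hr, T.parent_root] at hparent
  exact Nat.find_min h (show j < Nat.find h by omega) (hr.trans hparent)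

theorem mem_Ldesc {i v : Fin T.n} : i ∈ T.Ldesc v ↔ T.IsLeaf i ∧ T.Anc v i := by
  simp [Ldesc, leaves]

theorem Ldesc_subset_of_anc {u w : Fin T.n} (h : T.Anc u w) : T.Ldesc w ⊆ T.Ldesc u :=
  fun _ hi => mem_Ldesc.2 ⟨(mem_Ldesc.1 hi).1, h.trans (mem_Ldesc.1 hi).2⟩

theorem disjoint_Ldesc_of_not_anc {u w : Fin T.n} (huw : ¬ T.Anc u w) (hwu : ¬ T.Anc w u) :
    Disjoint (T.Ldesc u) (T.Ldesc w) :=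
  disjoint_left.2 fun _ hu hw =>
    ((mem_Ldesc.1 hu).2.total_of_anc (mem_Ldesc.1 hw).2).elim huw hwu

theorem disjoint_Ldesc_of_mem_children {v c₀ c₁ : Fin T.n} (h₀ : c₀ ∈ T.children v)
    (h₁ : c₁ ∈ T.children v) (hne : c₀ ≠ c₁) : Disjoint (T.Ldesc c₀) (T.Ldesc c₁) :=
  disjoint_Ldesc_of_not_anc (not_anc_of_mem_children h₀ h₁ hne)
    (not_anc_of_mem_children h₁ h₀ hne.symm)

theorem Ldesc_eq_biUnion_children {v : Fin T.n} (hv : ¬ T.IsLeaf v) :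
    T.Ldesc v = (T.children v).biUnion T.Ldesc := by
  ext i
  simp only [mem_biUnion]
  constructor
  · intro hi
    obtain ⟨hleaf, hvi⟩ := mem_Ldesc.1 hi
    obtain ⟨c, hc, hci⟩ := exists_mem_children_anc hvi fun h => hv (h ▸ hleaf)
    exact ⟨c, hc, mem_Ldesc.2 ⟨hleaf, hci⟩⟩
  · rintro ⟨c, hc, hi⟩
    exact Ldesc_subset_of_anc (anc_of_mem_children hc) hi

theorem Ldesc_nonempty (v : Fin T.n) : (T.Ldesc v).Nonempty := by
  obtain ⟨u, hu, hmin⟩ :=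
    exists_min_image (univ.filter (T.Anc v)) T.subtreeSize ⟨v, by simp [anc_refl]⟩
  rw [mem_filter] at hu
  refine ⟨u, mem_Ldesc.2 ⟨?_, hu.2⟩⟩
  by_contra hu_leaf
  obtain ⟨c, hc⟩ := nonempty_iff_ne_empty.2 hu_leaf
  have hsub : univ.filter (T.Anc c) ⊂ univ.filter (T.Anc u) := by
    refine (ssubset_iff_of_subset fun w hw => ?_).2 ⟨u, by simp [anc_refl], ?_⟩
    · simp only [mem_filter, mem_univ, true_and] at hw ⊢
      exact (anc_of_mem_children hc).trans hw
    · simp only [mem_filter, mem_univ, true_and]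
      exact fun hcu => ne_of_mem_children hc (hcu.antisymm (anc_of_mem_children hc))
  exact (card_lt_card hsub).not_ge
    (hmin c (by simpa using hu.2.trans (anc_of_mem_children hc)))

theorem cov_mulVec_apply (ℓ : Fin T.n → ℝ) (x : T.Leaf → ℝ) (i : T.Leaf) :
    (T.cov ℓ *ᵥ x) i =
      ∑ w ∈ univ.filter (· ≠ T.root), ℓ w * T.delta w i * (T.delta w ⬝ᵥ x) := by
  simp only [cov, sum_mulVec, smul_mulVec, vecMulVec_mulVec, Finset.sum_apply]
  refine sum_congr rfl fun w _ => ?_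
  simp only [Pi.smul_apply, MulOpposite.smul_eq_mul_unop, MulOpposite.unop_op, smul_eq_mul]
  ring

theorem delta_dotProduct (w : Fin T.n) (f : Fin T.n → ℝ) :
    T.delta w ⬝ᵥ (fun j : T.Leaf => f j) = ∑ i ∈ T.Ldesc w, f i := by
  rw [Ldesc, sum_filter, ← sum_coe_sort T.leaves]
  simp [dotProduct, delta]

theorem lstar_of_anc (ℓ : Fin T.n → ℝ) {i v : Fin T.n} (h : T.Anc v i) :
    T.lstar ℓ i v = ∑ w ∈ univ.filter (fun w => w ≠ T.root ∧ T.Anc w i ∧ ¬ T.Anc w v),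
      ((T.Ldesc w).card : ℝ) * ℓ w := by
  rw [lstar]
  congr 1
  refine filter_congr fun w _ => ?_
  have : T.Anc w v → T.Anc w i := (·.trans h)
  tauto

structure IsHaarLikeAt (v : Fin T.n) (f : Fin T.n → ℝ) : Prop where
  eq_zero_of_notMem : ∀ i ∉ T.Ldesc v, f i = 0
  sum_eq_zero : ∑ i ∈ T.Ldesc v, f i = 0
  eq_of_mem_children : ∀ c ∈ T.children v, ∀ i ∈ T.Ldesc c, ∀ j ∈ T.Ldesc c, f i = f j

namespace IsHaarLikeAt

variable {v : Fin T.n} {f : Fin T.n → ℝ}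

theorem sum_Ldesc_eq_zero (hf : T.IsHaarLikeAt v f) {w : Fin T.n} (hwv : T.Anc w v) :
    ∑ i ∈ T.Ldesc w, f i = 0 := by
  rw [← sum_subset (Ldesc_subset_of_anc hwv) fun i _ hi => hf.eq_zero_of_notMem i hi]
  exact hf.sum_eq_zero

theorem sum_Ldesc_eq_card_mul (hf : T.IsHaarLikeAt v f) {w i : Fin T.n} (hi : i ∈ T.Ldesc w)
    (hwv : ¬ T.Anc w v) : ∑ j ∈ T.Ldesc w, f j = (T.Ldesc w).card * f i := by
  by_cases hvw : T.Anc v w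
  · obtain ⟨c, hc, hcw⟩ := exists_mem_children_anc hvw fun h => hwv (h ▸ anc_refl T v)
    have hsub := Ldesc_subset_of_anc hcw
    rw [sum_congr rfl fun j hj => hf.eq_of_mem_children c hc j (hsub hj) i (hsub hi),
      sum_const, nsmul_eq_mul]
  · have hdisj := disjoint_left.1 (disjoint_Ldesc_of_not_anc hwv hvw)
    rw [Finset.sum_eq_zero fun j hj => hf.eq_zero_of_notMem j (hdisj hj),
      hf.eq_zero_of_notMem i (hdisj hi), mul_zero]

theorem cov_mulVec (hf : T.IsHaarLikeAt v f) (ℓ : Fin T.n → ℝ) (i : T.Leaf) :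
    (T.cov ℓ *ᵥ fun j => f j) i = T.lstar ℓ i v * f i := by
  have hleaf : T.IsLeaf i := (mem_filter.1 i.2).2
  have hterm : ∀ w, ℓ w * T.delta w i * ∑ j ∈ T.Ldesc w, f j =
      if T.Anc w i ∧ ¬ T.Anc w v then (T.Ldesc w).card * ℓ w * f i else 0 := by
    intro w
    by_cases hwi : T.Anc w i
    · by_cases hwv : T.Anc w v
      · simp [hf.sum_Ldesc_eq_zero hwv, hwv]
      · rw [hf.sum_Ldesc_eq_card_mul (mem_Ldesc.2 ⟨hleaf, hwi⟩) hwv, if_pos ⟨hwi, hwv⟩]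
        simp only [delta, if_pos hwi]
        ring
    · simp [delta, hwi]
  simp_rw [cov_mulVec_apply, delta_dotProduct, hterm, ← sum_filter, filter_filter, ← sum_mul]
  by_cases hfi : f i = 0
  · simp [hfi]
  · rw [lstar_of_anc ℓ (mem_Ldesc.1 (not_imp_comm.1 (hf.eq_zero_of_notMem i) hfi)).2]

end IsHaarLikeAt

theorem isHermitian_cov (ℓ : Fin T.n → ℝ) : (T.cov ℓ).IsHermitian :=
  IsHermitian.ext fun i j => by simp [cov, Matrix.sum_apply, vecMulVec_apply, mul_comm]

theorem sum_leaves_eq_sum_Ldesc {v : Fin T.n} {F : Fin T.n → ℝ}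
    (hF : ∀ i ∉ T.Ldesc v, F i = 0) : ∑ i : T.Leaf, F i = ∑ i ∈ T.Ldesc v, F i := by
  rw [sum_coe_sort T.leaves F]
  exact (sum_subset (filter_subset _ _) fun i _ hi => hF i hi).symm

section Binary

variable {v c₀ c₁ : Fin T.n}

theorem Ldesc_eq_union (hch : T.children v = {c₀, c₁}) :
    T.Ldesc v = T.Ldesc c₀ ∪ T.Ldesc c₁ := by
  rw [Ldesc_eq_biUnion_children (by simp [IsLeaf, hch]), hch, biUnion_insert, singleton_biUnion]

theorem disjoint_Ldesc_of_children_eq (hc : c₀ ≠ c₁) (hch : T.children v = {c₀, c₁}) :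
    Disjoint (T.Ldesc c₀) (T.Ldesc c₁) :=
  disjoint_Ldesc_of_mem_children (v := v) (by simp [hch]) (by simp [hch]) hc

theorem sum_Ldesc_eq_add (hc : c₀ ≠ c₁) (hch : T.children v = {c₀, c₁})
    (F : Fin T.n → ℝ) : ∑ i ∈ T.Ldesc v, F i = ∑ i ∈ T.Ldesc c₀, F i + ∑ i ∈ T.Ldesc c₁, F i := by
  rw [Ldesc_eq_union hch, sum_union (disjoint_Ldesc_of_children_eq hc hch)]

theorem card_Ldesc_eq_add (hc : c₀ ≠ c₁) (hch : T.children v = {c₀, c₁}) :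
    ((T.Ldesc v).card : ℝ) = (T.Ldesc c₀).card + (T.Ldesc c₁).card := by
  rw [Ldesc_eq_union hch, card_union_of_disjoint (disjoint_Ldesc_of_children_eq hc hch)]
  push_cast
  rfl

theorem card_Ldesc_pos (w : Fin T.n) : (0 : ℝ) < (T.Ldesc w).card := by
  exact_mod_cast (Ldesc_nonempty w).card_pos

variable (v c₀ c₁) in
def haarWavelet (i : Fin T.n) : ℝ :=
  if i ∈ T.Ldesc c₀ then √((#(T.Ldesc c₁) : ℝ) / (#(T.Ldesc c₀) * #(T.Ldesc v)))
  else if i ∈ T.Ldesc c₁ then -√((#(T.Ldesc c₀) : ℝ) / (#(T.Ldesc c₁) * #(T.Ldesc v)))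
  else 0

theorem haarWavelet_of_mem_right (hc : c₀ ≠ c₁) (hch : T.children v = {c₀, c₁})
    {i : Fin T.n} (hi : i ∈ T.Ldesc c₁) :
    T.haarWavelet v c₀ c₁ i = -√((#(T.Ldesc c₀) : ℝ) / (#(T.Ldesc c₁) * #(T.Ldesc v))) := by
  rw [haarWavelet, if_neg (disjoint_right.1 (disjoint_Ldesc_of_children_eq hc hch) hi), if_pos hi]

theorem haarWavelet_eq_zero (hch : T.children v = {c₀, c₁}) {i : Fin T.n}
    (hi : i ∉ T.Ldesc v) : T.haarWavelet v c₀ c₁ i = 0 := by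
  rw [Ldesc_eq_union hch, mem_union, not_or] at hi
  rw [haarWavelet, if_neg hi.1, if_neg hi.2]

theorem isHaarLikeAt_haarWavelet (hc : c₀ ≠ c₁) (hch : T.children v = {c₀, c₁}) :
    T.IsHaarLikeAt v (T.haarWavelet v c₀ c₁) where
  eq_zero_of_notMem _ := haarWavelet_eq_zero hch
  sum_eq_zero := by
    rw [sum_Ldesc_eq_add hc hch, sum_congr rfl fun i hi => by rw [haarWavelet, if_pos hi],
      sum_congr rfl fun i hi => haarWavelet_of_mem_right hc hch hi, sum_const, sum_const,
      nsmul_eq_mul, nsmul_eq_mul,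
      Real.mul_sqrt_div_mul_comm (card_Ldesc_pos c₀) (card_Ldesc_pos c₁)]
    ring
  eq_of_mem_children c hc' i hi j hj := by
    rw [hch, mem_insert, mem_singleton] at hc'
    rcases hc' with rfl | rfl
    · rw [haarWavelet, if_pos hi, haarWavelet, if_pos hj]
    · rw [haarWavelet_of_mem_right hc hch hi, haarWavelet_of_mem_right hc hch hj]

theorem sum_mul_haarWavelet_sq (hc : c₀ ≠ c₁) (hch : T.children v = {c₀, c₁})
    (g : Fin T.n → ℝ) : ∑ j : T.Leaf, g j * T.haarWavelet v c₀ c₁ j ^ 2 =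
      ((T.Ldesc c₁).card : ℝ) / (T.Ldesc v).card *
          ((∑ i ∈ T.Ldesc c₀, g i) / (T.Ldesc c₀).card) +
        ((T.Ldesc c₀).card : ℝ) / (T.Ldesc v).card *
          ((∑ i ∈ T.Ldesc c₁, g i) / (T.Ldesc c₁).card) := by
  have h₀ := card_Ldesc_pos c₀
  have h₁ := card_Ldesc_pos c₁
  have hv := card_Ldesc_pos v
  have hsplit : ∑ j : T.Leaf, g j * T.haarWavelet v c₀ c₁ j ^ 2 =
      (∑ i ∈ T.Ldesc c₀, g i) * (#(T.Ldesc c₁) / (#(T.Ldesc c₀) * #(T.Ldesc v))) +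
        (∑ i ∈ T.Ldesc c₁, g i) * (#(T.Ldesc c₀) / (#(T.Ldesc c₁) * #(T.Ldesc v))) := by
    rw [sum_leaves_eq_sum_Ldesc (F := fun i => g i * T.haarWavelet v c₀ c₁ i ^ 2)
        fun i hi => by simp [haarWavelet_eq_zero hch hi],
      sum_Ldesc_eq_add hc hch, sum_mul, sum_mul]
    congr 1 <;> refine sum_congr rfl fun i hi => ?_
    · rw [haarWavelet, if_pos hi, Real.sq_sqrt (by positivity)]
    · rw [haarWavelet_of_mem_right hc hch hi, neg_sq, Real.sq_sqrt (by positivity)]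
  rw [hsplit]
  field_simp

end Binary

end RTree

theorem lambda_v_spectral_estimate_general (T : RTree) (ℓ : Fin T.n → ℝ)
    (φ : Fin T.n → T.Leaf → ℝ)
    (v : Fin T.n)
    (c₀ c₁ : Fin T.n) (hc : c₀ ≠ c₁) (hch : T.children v = {c₀, c₁})
    (hφv : ∀ i : T.Leaf, φ v i =
      if i.1 ∈ T.Ldesc c₀ then
        Real.sqrt (((T.Ldesc c₁).card : ℝ) / (((T.Ldesc c₀).card : ℝ) * ((T.Ldesc v).card : ℝ)))
      else if i.1 ∈ T.Ldesc c₁ then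
        - Real.sqrt (((T.Ldesc c₀).card : ℝ) / (((T.Ldesc c₁).card : ℝ) * ((T.Ldesc v).card : ℝ)))
      else 0) :
    let S := T.cov ℓ
    let lam : ℝ := ∑ j : T.Leaf, ∑ i : T.Leaf, φ v j * S j i * φ v i
    let ρ₀ : ℝ := ((T.Ldesc c₀).card : ℝ) / ((T.Ldesc v).card : ℝ)
    let ρ₁ : ℝ := ((T.Ldesc c₁).card : ℝ) / ((T.Ldesc v).card : ℝ)
    let avg₀ : ℝ := (∑ i ∈ T.Ldesc c₀, T.lstar ℓ i v) / ((T.Ldesc c₀).card : ℝ)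
    let avg₁ : ℝ := (∑ i ∈ T.Ldesc c₁, T.lstar ℓ i v) / ((T.Ldesc c₁).card : ℝ)
    let var₀ : ℝ := (∑ i ∈ T.Ldesc c₀, (T.lstar ℓ i v - avg₀) ^ 2) / ((T.Ldesc c₀).card : ℝ)
    let var₁ : ℝ := (∑ i ∈ T.Ldesc c₁, (T.lstar ℓ i v - avg₁) ^ 2) / ((T.Ldesc c₁).card : ℝ)
    lam = ρ₁ * avg₀ + ρ₀ * avg₁ ∧
    (∑ j : T.Leaf, (S.mulVec (φ v) j - lam * φ v j) ^ 2)
      = ρ₀ * ρ₁ * (avg₁ - avg₀) ^ 2 + ρ₁ * var₀ + ρ₀ * var₁ ∧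
    ∃ μ ∈ spectrum ℝ S, |μ - lam| ≤
      Real.sqrt (∑ j : T.Leaf, (S.mulVec (φ v) j - lam * φ v j) ^ 2) := by
  intro S lam ρ₀ ρ₁ avg₀ avg₁ var₀ var₁
  have hφ : φ v = fun i : T.Leaf => T.haarWavelet v c₀ c₁ i := funext hφv
  have hSφ (i : T.Leaf) : S.mulVec (φ v) i = T.lstar ℓ i v * φ v i := by
    rw [hφ]
    exact (RTree.isHaarLikeAt_haarWavelet hc hch).cov_mulVec ℓ i
  have hweighted (g : Fin T.n → ℝ) :
      ∑ j : T.Leaf, g j * φ v j ^ 2 = ρ₁ * ((∑ i ∈ T.Ldesc c₀, g i) / (T.Ldesc c₀).card) +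
        ρ₀ * ((∑ i ∈ T.Ldesc c₁, g i) / (T.Ldesc c₁).card) := by
    rw [hφ]
    exact RTree.sum_mul_haarWavelet_sq hc hch g
  have hρ : ρ₀ + ρ₁ = 1 := by
    rw [← add_div, ← RTree.card_Ldesc_eq_add hc hch, div_self (RTree.card_Ldesc_pos v).ne']
  have hlam : lam = ρ₁ * avg₀ + ρ₀ * avg₁ :=
    calc lam = ∑ j : T.Leaf, φ v j * S.mulVec (φ v) j := by
          simp only [lam, Matrix.mulVec, dotProduct, mul_sum, mul_assoc]
      _ = ∑ j : T.Leaf, T.lstar ℓ j v * φ v j ^ 2 := sum_congr rfl fun j _ => by rw [hSφ]; ring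
      _ = ρ₁ * avg₀ + ρ₀ * avg₁ := hweighted (T.lstar ℓ · v)
  refine ⟨hlam, ?_, ?_⟩
  · calc ∑ j : T.Leaf, (S.mulVec (φ v) j - lam * φ v j) ^ 2
        = ∑ j : T.Leaf, (T.lstar ℓ j v - lam) ^ 2 * φ v j ^ 2 :=
          sum_congr rfl fun j _ => by rw [hSφ]; ring
      _ = ρ₁ * (var₀ + (avg₀ - lam) ^ 2) + ρ₀ * (var₁ + (avg₁ - lam) ^ 2) := by
          rw [hweighted fun i => (T.lstar ℓ i v - lam) ^ 2,
            sum_sq_sub_div_card _ (RTree.Ldesc_nonempty c₀) _ lam,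
            sum_sq_sub_div_card _ (RTree.Ldesc_nonempty c₁) _ lam]
      _ = ρ₀ * ρ₁ * (avg₁ - avg₀) ^ 2 + ρ₁ * var₀ + ρ₀ * var₁ := by
          rw [hlam, show ρ₁ = 1 - ρ₀ by linarith]
          ring
  · refine (RTree.isHermitian_cov ℓ).exists_mem_spectrum_abs_sub_le ?_ lam
    simpa [div_self (RTree.card_Ldesc_pos _).ne', hρ, add_comm] using hweighted 1

/-- For a non-root internal node `v` with children `c₀ = v0`, `c₁ = v1`, the diagonal
entry `λ_v = φ_v' S φ_v` equals `ρ_{v1} avg(ℓ*(·,v); L(v0)) + ρ_{v0} avg(ℓ*(·,v); L(v1))`,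
`‖(S - λ_v)φ_v‖₂²` has the stated expression in terms of averages and variances, and
`dist(λ_v, σ(S)) ≤ ‖(S - λ_v)φ_v‖₂`. -/
theorem lambda_v_spectral_estimate (T : RTree) (hT : T.IsORB) (ℓ : Fin T.n → ℝ)
    (hℓ : ∀ v, 0 ≤ ℓ v) (hℓpos : ∀ v, T.IsLeaf v → 0 < ℓ v)
    (φ : Fin T.n → T.Leaf → ℝ) (hφ : T.IsHaarLike φ)
    (v : Fin T.n) (hv : v ∈ T.internal) (hvr : v ≠ T.root)
    (c₀ c₁ : Fin T.n) (hc : c₀ ≠ c₁) (hch : T.children v = {c₀, c₁})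
    (hφv : ∀ i : T.Leaf, φ v i =
      if i.1 ∈ T.Ldesc c₀ then
        Real.sqrt (((T.Ldesc c₁).card : ℝ) / (((T.Ldesc c₀).card : ℝ) * ((T.Ldesc v).card : ℝ)))
      else if i.1 ∈ T.Ldesc c₁ then
        - Real.sqrt (((T.Ldesc c₀).card : ℝ) / (((T.Ldesc c₁).card : ℝ) * ((T.Ldesc v).card : ℝ)))
      else 0) :
    let S := T.cov ℓ
    let lam : ℝ := ∑ j : T.Leaf, ∑ i : T.Leaf, φ v j * S j i * φ v i
    let ρ₀ : ℝ := ((T.Ldesc c₀).card : ℝ) / ((T.Ldesc v).card : ℝ)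
    let ρ₁ : ℝ := ((T.Ldesc c₁).card : ℝ) / ((T.Ldesc v).card : ℝ)
    let avg₀ : ℝ := (∑ i ∈ T.Ldesc c₀, T.lstar ℓ i v) / ((T.Ldesc c₀).card : ℝ)
    let avg₁ : ℝ := (∑ i ∈ T.Ldesc c₁, T.lstar ℓ i v) / ((T.Ldesc c₁).card : ℝ)
    let var₀ : ℝ := (∑ i ∈ T.Ldesc c₀, (T.lstar ℓ i v - avg₀) ^ 2) / ((T.Ldesc c₀).card : ℝ)
    let var₁ : ℝ := (∑ i ∈ T.Ldesc c₁, (T.lstar ℓ i v - avg₁) ^ 2) / ((T.Ldesc c₁).card : ℝ)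
    lam = ρ₁ * avg₀ + ρ₀ * avg₁ ∧
    (∑ j : T.Leaf, (S.mulVec (φ v) j - lam * φ v j) ^ 2)
      = ρ₀ * ρ₁ * (avg₁ - avg₀) ^ 2 + ρ₁ * var₀ + ρ₀ * var₁ ∧
    ∃ μ ∈ spectrum ℝ S, |μ - lam| ≤
      Real.sqrt (∑ j : T.Leaf, (S.mulVec (φ v) j - lam * φ v j) ^ 2) :=
  lambda_v_spectral_estimate_general T ℓ φ v c₀ c₁ hc hch hφv
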